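/- Let s > 0, let α ≥ 2 be an even natural number, let g(y) = y / (1 + (y/s)^α) be the Rapp function, let d ≥ 1, and let {(x⁽ⁱ⁾, t⁽ⁱ⁾)}_{i=1}^D be a data set of D pairwise distinct observation vectors x⁽ⁱ⁾ ∈ ℝ^d with targets t⁽ⁱ⁾ ∈ ℝ, and augmented vectors x̃⁽ⁱ⁾ = (x⁽ⁱ⁾, 1) ∈ ℝ^{d+1}. Then for every ε > 0 there exists a number of hidden nodes N_r ≤ D such that, for almost every realization of a random matrix H ∈ ℝ^{N_r × (d+1)} with independent standard Gaussian entries, there exists a weight vector w ∈ ℝ^{N_r} with ‖G·w − t‖ < ε, where G ∈ ℝ^{D × N_r} has entries G_{i,j} = g(⟨H_{j,·}, x̃⁽ⁱ⁾⟩), t = (t⁽¹⁾, …, t⁽ᴰ⁾) ∈ ℝ^D, and ‖·‖ is the Euclidean norm on ℝ^D. -/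

import Mathlib

/-!
Take `N_r = D`; it suffices that the square matrix `G(H)` is invertible for almost every `H`,
since then `w = G(H)⁻¹ t` fits the targets exactly. Clearing the denominators
`s^α + y^α > 0` (positive because `α` is even) turns `det G(H)` into a polynomial in the entries
of `H` up to a nonvanishing factor, and the zero set of a nonzero polynomial is null for any
product of atomless measures (Fubini and induction on the number of variables). So it is enough
to find one `H` with `G(H)` invertible. For a rank-one `H = c ⊗ e`, with `e` chosen so that the
numbers `bᵢ = ⟨e, x̃⁽ⁱ⁾⟩` are nonzero with pairwise distinct absolute values, `G(H)` is the
matrix `(g(c_j bᵢ))`, and the functions `c ↦ g(c bᵢ)` are linearly independent: after clearing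
denominators, a linear relation would be a polynomial identity, which fails at a complex pole of
exactly one summand.
-/

open MeasureTheory ProbabilityTheory

theorem MeasureTheory.measurePreserving_curry_symm {ι κ α : Type*} [MeasurableSpace α]
    [Fintype ι] [Fintype κ] (μ : ι → κ → Measure α) [∀ i j, SigmaFinite (μ i j)] :
    MeasurePreserving (MeasurableEquiv.curry ι κ α).symm
      (Measure.pi fun i => Measure.pi (μ i)) (Measure.pi fun p : ι × κ => μ p.1 p.2) where
  measurable := (MeasurableEquiv.curry ι κ α).symm.measurable
  map_eq := by
    refine (Measure.pi_eq fun s hs => ?_).symm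
    have hpre : (MeasurableEquiv.curry ι κ α).symm ⁻¹' Set.univ.pi s
        = Set.univ.pi fun i => Set.univ.pi fun j => s (i, j) := by
      ext H
      simp [MeasurableEquiv.curry, Function.uncurry]
    rw [MeasurableEquiv.map_apply, hpre, Measure.pi_pi]
    simp_rw [Measure.pi_pi, Fintype.prod_prod_type]

namespace MvPolynomial

variable {ι κ : Type*}

theorem measurableSet_eval_ne_zero [Fintype ι] (P : MvPolynomial ι ℝ) :
    MeasurableSet {x : ι → ℝ | eval x P ≠ 0} :=
  (measurableSet_singleton 0).compl.preimage (continuous_eval P).measurable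

theorem ae_eval_ne_zero_of_isEmpty [Fintype ι] [IsEmpty ι] (μ : ι → Measure ℝ)
    {P : MvPolynomial ι ℝ} (hP : P ≠ 0) : ∀ᵐ x ∂Measure.pi μ, eval x P ≠ 0 := by
  rw [P.eq_C_of_isEmpty] at hP ⊢
  exact ae_of_all _ fun x => by simpa using hP

theorem ae_eval_ne_zero_option [Fintype ι] (μ : Option ι → Measure ℝ)
    [∀ i, SigmaFinite (μ i)] [NullSingletonClass (μ none)]
    (ih : ∀ Q : MvPolynomial ι ℝ, Q ≠ 0 →
      ∀ᵐ y ∂Measure.pi (fun i => μ (some i)), eval y Q ≠ 0)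
    {P : MvPolynomial (Option ι) ℝ} (hP : P ≠ 0) : ∀ᵐ x ∂Measure.pi μ, eval x P ≠ 0 := by
  set Q := optionEquivLeft ℝ ι P
  have hQ : Q ≠ 0 := EmbeddingLike.map_ne_zero_iff.2 hP
  have hfiber : ∀ᵐ y ∂Measure.pi (fun i => μ (some i)), ∀ᵐ a ∂μ none,
      (Q.map (eval y)).eval a ≠ 0 := by
    filter_upwards [ih _ (Polynomial.leadingCoeff_ne_zero.2 hQ)] with y hy
    have hmap : Q.map (eval y) ≠ 0 := fun h => hy <| by
      simpa using congrArg (Polynomial.coeff · Q.natDegree) h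
    exact (Polynomial.finite_setOfPred_isRoot hmap).countable.ae_notMem _
  rw [← Measure.pi_map_piOptionEquivProd μ,
    (MeasurableEquiv.measurableEmbedding _).ae_map_iff]
  refine (Measure.ae_prod_iff_ae_ae ((measurableSet_eval_ne_zero P).preimage
    (MeasurableEquiv.measurable _))).2 ?_
  filter_upwards [hfiber] with y hy
  filter_upwards [hy] with a ha
  have he : (MeasurableEquiv.piOptionEquivProd (fun _ : Option ι => ℝ)).symm (y, a)
      = fun x => Option.elim x a y := by
    ext x; cases x <;> rfl
  rwa [he, optionEquivLeft_elim_eval]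

theorem ae_eval_ne_zero_of_equiv [Fintype ι] [Fintype κ] (e : ι ≃ κ) (μ : κ → Measure ℝ)
    [∀ i, SigmaFinite (μ i)]
    (h : ∀ Q : MvPolynomial ι ℝ, Q ≠ 0 → ∀ᵐ y ∂Measure.pi (fun i => μ (e i)), eval y Q ≠ 0)
    {P : MvPolynomial κ ℝ} (hP : P ≠ 0) : ∀ᵐ x ∂Measure.pi μ, eval x P ≠ 0 := by
  rw [← (measurePreserving_piCongrLeft (α := fun _ => ℝ) μ e).map_eq,
    (MeasurableEquiv.measurableEmbedding _).ae_map_iff]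
  have hP' : rename e.symm P ≠ 0 :=
    (rename_injective _ e.symm.injective).ne_iff' (map_zero _) |>.2 hP
  filter_upwards [h _ hP'] with y hy
  have hy' : MeasurableEquiv.piCongrLeft (fun _ => ℝ) e y = y ∘ e.symm := by
    ext b
    simp [MeasurableEquiv.coe_piCongrLeft, Equiv.piCongrLeft_apply_eq_cast]
  rwa [hy', ← eval_rename]

theorem ae_eval_ne_zero [Fintype ι] (μ : ι → Measure ℝ) [∀ i, SigmaFinite (μ i)]
    [∀ i, NullSingletonClass (μ i)] {P : MvPolynomial ι ℝ} (hP : P ≠ 0) :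
    ∀ᵐ x ∂Measure.pi μ, eval x P ≠ 0 := by
  revert μ P
  refine Fintype.induction_empty_option (P := fun ι _ => ∀ (μ : ι → Measure ℝ)
    [∀ i, SigmaFinite (μ i)] [∀ i, NullSingletonClass (μ i)] {P : MvPolynomial ι ℝ},
    P ≠ 0 → ∀ᵐ x ∂Measure.pi μ, eval x P ≠ 0) ?_ ?_ ?_ ι
  · intro ι κ _ e ih μ _ _ P hP
    let _ := Fintype.ofEquiv κ e.symm
    exact ae_eval_ne_zero_of_equiv e μ (fun Q hQ => ih _ hQ) hP
  · intro μ _ _ P hP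
    exact ae_eval_ne_zero_of_isEmpty μ hP
  · intro ι _ ih μ _ _ P hP
    exact ae_eval_ne_zero_option μ (fun Q hQ => ih _ hQ) hP

theorem ae_eval_uncurry_ne_zero [Fintype ι] [Fintype κ] (μ : ι → κ → Measure ℝ)
    [∀ i j, SigmaFinite (μ i j)] [∀ i j, NullSingletonClass (μ i j)]
    {P : MvPolynomial (ι × κ) ℝ} (hP : P ≠ 0) :
    ∀ᵐ H ∂Measure.pi fun i => Measure.pi (μ i), eval (fun p => H p.1 p.2) P ≠ 0 :=
  (measurePreserving_curry_symm μ).quasiMeasurePreserving.ae (ae_eval_ne_zero _ hP)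

end MvPolynomial

theorem exists_injective_dotProduct {K ι κ : Type*} [Field K] [Infinite K] [Finite ι]
    [Fintype κ] {y : ι → κ → K} (hy : Function.Injective y) :
    ∃ e : κ → K, Function.Injective fun i => e ⬝ᵥ y i := by
  classical
  by_contra! h
  let p : {q : ι × ι // q.1 ≠ q.2} → Subspace K (κ → K) := fun q =>
    LinearMap.ker (dotProductBilin K K |>.flip (y q.1.1 - y q.1.2))
  have hcover : ⋃ q, (p q : Set (κ → K)) = Set.univ := by
    refine Set.eq_univ_of_forall fun e => ?_
    obtain ⟨i, j, hij, hne⟩ := Function.not_injective_iff.mp (h e)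
    exact Set.mem_iUnion.2 ⟨⟨(i, j), hne⟩, by simp [p, hij]⟩
  obtain ⟨⟨⟨i, j⟩, hne⟩, htop⟩ := Subspace.exists_eq_top_of_iUnion_eq_univ hcover
  refine hne (hy (sub_eq_zero.mp (funext fun k => ?_)))
  have hk : Pi.single k 1 ∈ p ⟨(i, j), hne⟩ := htop ▸ Submodule.mem_top
  simpa [p] using hk

theorem LinearIndependent.top_le_span_range_swap {K X ι : Type*} [Field K] [Fintype ι]
    {f : ι → X → K} (hf : LinearIndependent K f) :
    ⊤ ≤ Submodule.span K (Set.range (Function.swap f)) := by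
  classical
  by_contra hlt
  obtain ⟨φ, hφ, hker⟩ := Submodule.exists_dual_map_eq_bot_of_lt_top
    (lt_top_iff_ne_top.2 fun h => hlt h.ge) inferInstance
  have hcoeff := Fintype.linearIndependent_iff.1 hf (fun i => φ (Pi.single i 1)) <| by
    funext x
    have hx := Submodule.mem_map_of_mem (f := φ)
      (Submodule.subset_span (Set.mem_range_self (f := Function.swap f) x))
    rw [hker, Submodule.mem_bot, pi_eq_sum_univ' (Function.swap f x), map_sum] at hx
    simpa [mul_comm] using hx
  exact hφ (LinearMap.pi_ext' fun i => LinearMap.ext_ring (by simpa using hcoeff i))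

theorem LinearIndependent.exists_isUnit_of_apply {K X ι : Type*} [Field K] [Fintype ι]
    [DecidableEq ι] {f : ι → X → K} (hf : LinearIndependent K f) :
    ∃ x : ι → X, IsUnit (Matrix.of fun i j => f i (x j)) := by
  have hspan := hf.top_le_span_range_swap
  let b := (Module.Basis.ofSpan hspan).reindex
    ((Module.Basis.ofSpan hspan).indexEquiv (Pi.basisFun K ι))
  have hb : ∀ j, b j ∈ Set.range (Function.swap f) := fun j =>
    Module.Basis.ofSpan_subset hspan (by simp [b])
  choose x hx using hb
  refine ⟨x, Matrix.linearIndependent_cols_iff_isUnit.1 ?_⟩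
  have hcol : (Matrix.of fun i j => f i (x j)).col = b := by
    ext j i
    simp [Matrix.col, ← hx j]
  rw [hcol]
  exact b.linearIndependent

noncomputable def rapp (s : ℝ) (α : ℕ) (y : ℝ) : ℝ := y / (1 + (y / s) ^ α)

theorem rapp_mul_add_pow {s : ℝ} (hs : s ≠ 0) {α : ℕ} (hα : Even α) (y : ℝ) :
    rapp s α y * (s ^ α + y ^ α) = s ^ α * y := by
  have hden : 1 + (y / s) ^ α ≠ 0 := by linarith [hα.pow_nonneg (y / s)]
  rw [rapp, show s ^ α + y ^ α = s ^ α * (1 + (y / s) ^ α) by rw [div_pow]; field_simp]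
  field_simp

theorem Finset.eq_zero_of_sum_mul_prod_erase_eq_zero {ι A : Type*} [Fintype ι] [DecidableEq ι]
    [CommSemiring A] [IsDomain A] {a q : ι → A} {i₀ : ι} (hq₀ : q i₀ = 0)
    (hq : ∀ k, k ≠ i₀ → q k ≠ 0)
    (h : ∑ i, a i * ∏ k ∈ univ.erase i, q k = 0) : a i₀ = 0 := by
  rw [Finset.sum_eq_single i₀ (fun i _ hi => by
    rw [Finset.prod_eq_zero (Finset.mem_erase.2 ⟨Ne.symm hi, Finset.mem_univ _⟩) hq₀, mul_zero])
    (by simp)] at h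
  exact (mul_eq_zero.1 h).resolve_right
    (Finset.prod_ne_zero_iff.2 fun k hk => hq k (Finset.ne_of_mem_erase hk))

open Polynomial in
theorem sum_mul_prod_erase_eq_zero_of_forall_sum_rapp_eq_zero {ι : Type*} [Fintype ι]
    [DecidableEq ι] {s : ℝ} (hs : s ≠ 0) {α : ℕ} (hα : Even α) {b lam : ι → ℝ}
    (h : ∀ c, ∑ i, lam i * rapp s α (c * b i) = 0) (z : ℂ) :
    ∑ i, ((lam i * b i : ℝ) : ℂ) * z *
      ∏ k ∈ Finset.univ.erase i, ((s : ℂ) ^ α + (b k : ℂ) ^ α * z ^ α) = 0 := by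
  let Q : ι → ℝ[X] := fun k => C (s ^ α) + C (b k ^ α) * X ^ α
  let P : ℝ[X] := ∑ i, C (lam i * b i) * X * ∏ k ∈ Finset.univ.erase i, Q k
  have hP : P = 0 := by
    refine Polynomial.funext fun c => ?_
    have key : s ^ α * P.eval c
        = (∑ i, lam i * rapp s α (c * b i)) * ∏ k, (s ^ α + b k ^ α * c ^ α) := by
      simp only [P, Q, eval_finsetSum, eval_prod, eval_mul, eval_C, eval_X, eval_add, eval_pow,
        Finset.sum_mul, Finset.mul_sum]
      refine Finset.sum_congr rfl fun i _ => ?_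
      rw [← Finset.mul_prod_erase _ _ (Finset.mem_univ i)]
      linear_combination (-(lam i) * ∏ k ∈ Finset.univ.erase i, (s ^ α + b k ^ α * c ^ α)) *
        rapp_mul_add_pow hs hα (c * b i)
    simpa [h c, hs] using key
  simpa [P, Q, map_sum, map_prod, aeval_C, aeval_X] using congrArg (aeval z) hP

theorem linearIndependent_rapp_comp_mul {ι : Type*} [Fintype ι] {s : ℝ} (hs : s ≠ 0) {α : ℕ}
    (hα0 : α ≠ 0) (hα : Even α) {b : ι → ℝ} (hb0 : ∀ i, b i ≠ 0)
    (hb : Function.Injective fun i => |b i|) :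
    LinearIndependent ℝ fun i (c : ℝ) => rapp s α (c * b i) := by
  classical
  rw [Fintype.linearIndependent_iff]
  intro lam hlam i₀
  have hsum : ∀ c, ∑ i, lam i * rapp s α (c * b i) = 0 := fun c => by
    simpa using congrFun hlam c
  have hbi₀ : (b i₀ : ℂ) ≠ 0 := by exact_mod_cast hb0 i₀
  -- `z` is a complex pole of the `i₀`-th summand and of no other one.
  obtain ⟨z, hz⟩ := IsAlgClosed.exists_pow_nat_eq (-((s : ℂ) ^ α / (b i₀ : ℂ) ^ α))
    (Nat.pos_of_ne_zero hα0)
  have hpole : ∀ k, (s : ℂ) ^ α + (b k : ℂ) ^ α * z ^ α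
      = (s : ℂ) ^ α * ((b i₀ : ℂ) ^ α - (b k : ℂ) ^ α) / (b i₀ : ℂ) ^ α := fun k => by
    rw [hz]
    field_simp
    ring
  have hz0 : z ≠ 0 := by
    rintro rfl
    simp [zero_pow hα0, hs, hb0 i₀] at hz
  have hpole_ne : ∀ k, k ≠ i₀ → (s : ℂ) ^ α + (b k : ℂ) ^ α * z ^ α ≠ 0 := by
    intro k hk
    rw [hpole]
    refine div_ne_zero (mul_ne_zero (pow_ne_zero _ (by exact_mod_cast hs))
      (sub_ne_zero.2 fun h => hk (hb ?_))) (pow_ne_zero _ hbi₀)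
    have h' : |b k| ^ α = |b i₀| ^ α := by
      rw [hα.pow_abs, hα.pow_abs]; exact_mod_cast h.symm
    exact (pow_left_inj₀ (abs_nonneg _) (abs_nonneg _) hα0).1 h'
  have h := Finset.eq_zero_of_sum_mul_prod_erase_eq_zero (by simp [hpole]) hpole_ne
    (sum_mul_prod_erase_eq_zero_of_forall_sum_rapp_eq_zero hs hα hsum z)
  simpa [hb0 i₀, hz0] using h

open MvPolynomial in
theorem eval_det_rapp_cleared {σ m : Type*} [Fintype m] [DecidableEq m] {s : ℝ} (hs : s ≠ 0)
    {α : ℕ} (hα : Even α) (Y : Matrix m m (MvPolynomial σ ℝ)) (x : σ → ℝ) :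
    eval x (Matrix.of fun i j => C (s ^ α) * Y i j *
        ∏ i' ∈ Finset.univ.erase i, (C (s ^ α) + Y i' j ^ α)).det
      = (∏ j, ∏ i, (s ^ α + eval x (Y i j) ^ α)) *
        (Matrix.of fun i j => rapp s α (eval x (Y i j))).det := by
  rw [RingHom.map_det, ← Matrix.det_mul_row]
  congr 1
  ext i j
  simp only [RingHom.mapMatrix_apply, Matrix.map_apply, Matrix.of_apply, map_mul, map_prod,
    map_add, map_pow, eval_C]
  rw [← Finset.mul_prod_erase _ _ (Finset.mem_univ i)]
  linear_combination (-∏ i' ∈ Finset.univ.erase i, (s ^ α + eval x (Y i' j) ^ α)) *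
    rapp_mul_add_pow hs hα (eval x (Y i j))

noncomputable def hiddenMatrix {m n κ : Type*} [Fintype κ] (s : ℝ) (α : ℕ) (x : m → κ → ℝ)
    (H : n → κ → ℝ) : Matrix m n ℝ :=
  Matrix.of fun i j => rapp s α (H j ⬝ᵥ x i)

section HiddenMatrix

variable {m κ : Type*} [Fintype m] [Fintype κ] {s : ℝ} {α : ℕ}

theorem exists_dotProduct_ne_zero_abs_injective {x : m → κ → ℝ}
    (hx : Function.Injective (Sum.elim x (-x))) :
    ∃ e : κ → ℝ, (∀ i, e ⬝ᵥ x i ≠ 0) ∧ Function.Injective fun i => |e ⬝ᵥ x i| := by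
  obtain ⟨e, he⟩ := exists_injective_dotProduct hx
  refine ⟨e, fun i h => ?_, fun i j h => ?_⟩
  · exact Sum.inl_ne_inr (@he (.inl i) (.inr i) (by simp [h]))
  · rcases abs_eq_abs.1 h with h | h
    · exact Sum.inl_injective (@he (.inl i) (.inl j) h)
    · exact absurd (@he (.inl i) (.inr j) (by simpa using h)) Sum.inl_ne_inr

variable [DecidableEq m]

theorem exists_isUnit_hiddenMatrix (hs : s ≠ 0) (hα0 : α ≠ 0) (hα : Even α) {x : m → κ → ℝ}
    (hx : Function.Injective (Sum.elim x (-x))) :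
    ∃ H : m → κ → ℝ, IsUnit (hiddenMatrix s α x H) := by
  obtain ⟨e, he0, he⟩ := exists_dotProduct_ne_zero_abs_injective hx
  obtain ⟨c, hc⟩ := (linearIndependent_rapp_comp_mul hs hα0 hα he0 he).exists_isUnit_of_apply
  refine ⟨fun j => c j • e, ?_⟩
  simpa [hiddenMatrix, smul_dotProduct] using hc

open MvPolynomial in
theorem exists_eval_eq_prod_mul_det_hiddenMatrix (hs : s ≠ 0) (hα : Even α) (x : m → κ → ℝ) :
    ∃ P : MvPolynomial (m × κ) ℝ, ∀ H : m → κ → ℝ, eval (fun p => H p.1 p.2) P =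
      (∏ j, ∏ i, (s ^ α + (H j ⬝ᵥ x i) ^ α)) * (hiddenMatrix s α x H).det := by
  let Y : Matrix m m (MvPolynomial (m × κ) ℝ) := .of fun i j => ∑ k, X (j, k) * C (x i k)
  have hY : ∀ H : m → κ → ℝ, ∀ i j, eval (fun p => H p.1 p.2) (Y i j) = H j ⬝ᵥ x i := by
    intro H i j
    simp [Y, dotProduct]
  refine ⟨_, fun H => (eval_det_rapp_cleared hs hα Y _).trans ?_⟩
  simp only [hY, hiddenMatrix]

theorem ae_isUnit_hiddenMatrix (μ : m → κ → Measure ℝ) [∀ j k, SigmaFinite (μ j k)]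
    [∀ j k, NullSingletonClass (μ j k)] (hs : s ≠ 0) (hα0 : α ≠ 0) (hα : Even α)
    {x : m → κ → ℝ} (hx : Function.Injective (Sum.elim x (-x))) :
    ∀ᵐ H ∂Measure.pi fun j => Measure.pi (μ j), IsUnit (hiddenMatrix s α x H) := by
  obtain ⟨H₀, hH₀⟩ := exists_isUnit_hiddenMatrix hs hα0 hα hx
  obtain ⟨P, hP⟩ := exists_eval_eq_prod_mul_det_hiddenMatrix hs hα x
  have hpos : ∀ H : m → κ → ℝ, ∏ j, ∏ i, (s ^ α + (H j ⬝ᵥ x i) ^ α) ≠ 0 := fun H =>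
    Finset.prod_ne_zero_iff.2 fun j _ => Finset.prod_ne_zero_iff.2 fun i _ =>
      (add_pos_of_pos_of_nonneg (hα.pow_pos hs) (hα.pow_nonneg _)).ne'
  have hP0 : P ≠ 0 := fun h => by
    simpa [h, hpos H₀, (Matrix.isUnit_iff_isUnit_det _).1 hH₀ |>.ne_zero] using hP H₀
  filter_upwards [MvPolynomial.ae_eval_uncurry_ne_zero μ hP0] with H hH
  rw [hP] at hH
  exact (Matrix.isUnit_iff_isUnit_det _).2 (right_ne_zero_of_mul hH).isUnit

end HiddenMatrix

theorem injective_sumElim_snoc_one_neg {ι : Type*} {d : ℕ} {x : ι → Fin d → ℝ}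
    (hx : Function.Injective x) :
    Function.Injective (Sum.elim (fun i => (Fin.snoc (x i) 1 : Fin (d + 1) → ℝ))
      (-fun i => Fin.snoc (x i) 1)) := by
  have hsnoc : Function.Injective fun i => (Fin.snoc (x i) 1 : Fin (d + 1) → ℝ) :=
    fun i j h => hx (Fin.snoc_injective2 h).1
  refine hsnoc.sumElim (neg_injective.comp hsnoc) fun i j h => ?_
  have := congrFun h (Fin.last d)
  norm_num at this

theorem elm_universal_approximation_general (s : ℝ) (hs : 0 < s) (α : ℕ) (hα : 2 ≤ α)
    (hαe : Even α) (d D : ℕ)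
    (x : Fin D → Fin d → ℝ) (hx : Function.Injective x) (t : Fin D → ℝ) :
    ∀ ε : ℝ, 0 < ε → ∃ Nr : ℕ, Nr ≤ D ∧
      ∀ᵐ H : Fin Nr → Fin (d + 1) → ℝ
        ∂(Measure.pi fun _ : Fin Nr => Measure.pi fun _ : Fin (d + 1) => gaussianReal 0 1),
        ∃ w : Fin Nr → ℝ,
          Real.sqrt (∑ i, (∑ j, ((∑ k, H j k * (Fin.snoc (x i) 1 : Fin (d + 1) → ℝ) k)
              / (1 + ((∑ k, H j k * (Fin.snoc (x i) 1 : Fin (d + 1) → ℝ) k) / s) ^ α)) * w j - t i) ^ 2)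
            < ε := by
  intro ε hε
  have := nullSingletonClass_gaussianReal (μ := 0) one_ne_zero
  refine ⟨D, le_rfl, ?_⟩
  filter_upwards [ae_isUnit_hiddenMatrix (fun _ _ => gaussianReal 0 1) hs.ne' (by omega) hαe
    (injective_sumElim_snoc_one_neg hx)] with H hH
  set G := hiddenMatrix s α (fun i => (Fin.snoc (x i) 1 : Fin (d + 1) → ℝ)) H
  have hsol : G.mulVec (G⁻¹.mulVec t) = t := by
    rw [Matrix.mulVec_mulVec, Matrix.mul_nonsing_inv _ ((Matrix.isUnit_iff_isUnit_det _).1 hH),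
      Matrix.one_mulVec]
  refine ⟨G⁻¹.mulVec t, ?_⟩
  show Real.sqrt (∑ i, ((G.mulVec (G⁻¹.mulVec t)) i - t i) ^ 2) < ε
  simpa [hsol] using hε

/-- Universal approximation for the XL-MIMO-ELM: for the Rapp activation (`s > 0`,
even `α ≥ 2`), a data set of `D` pairwise distinct observations `x⁽ⁱ⁾ ∈ ℝ^d`
(`d ≥ 1`, augmented by a trailing `1`) with targets `t⁽ⁱ⁾ ∈ ℝ`, and any `ε > 0`,
there exists a number of hidden nodes `N_r ≤ D` such that for almost every random
matrix `H ∈ ℝ^{N_r×(d+1)}` with i.i.d. standard Gaussian entries there is a weight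
vector `w ∈ ℝ^{N_r}` with `‖G w − t‖ < ε` in the Euclidean norm, where
`G_{i,j} = g(⟨H_{j,·}, x̃⁽ⁱ⁾⟩)`. -/
theorem elm_universal_approximation (s : ℝ) (hs : 0 < s) (α : ℕ) (hα : 2 ≤ α)
    (hαe : Even α) (d D : ℕ) (hd : 1 ≤ d)
    (x : Fin D → Fin d → ℝ) (hx : Function.Injective x) (t : Fin D → ℝ) :
    ∀ ε : ℝ, 0 < ε → ∃ Nr : ℕ, Nr ≤ D ∧
      ∀ᵐ H : Fin Nr → Fin (d + 1) → ℝ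
        ∂(Measure.pi fun _ : Fin Nr => Measure.pi fun _ : Fin (d + 1) => gaussianReal 0 1),
        ∃ w : Fin Nr → ℝ,
          Real.sqrt (∑ i, (∑ j, ((∑ k, H j k * (Fin.snoc (x i) 1 : Fin (d + 1) → ℝ) k)
              / (1 + ((∑ k, H j k * (Fin.snoc (x i) 1 : Fin (d + 1) → ℝ) k) / s) ^ α)) * w j - t i) ^ 2)
            < ε :=
  elm_universal_approximation_general s hs α hα hαe d D x hx t
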